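/- Fix a positive integer l and let a_r be the coefficient of x^r in (x²+x+1)^{l-1}(2x+1)(x+2)(x-1), for 0 ≤ r ≤ 2l+1. Then for every m with 0 ≤ m ≤ 2l+1, Σ_{r=0}^{m} C(2l+1-r, m-r) (−1)^r a_r = a_m. -/
import Mathlib


open Finset Polynomial

noncomputable section

/-- the polynomial `(x²+x+1)^{l-1}(2x+1)(x+2)(x-1)` -/
def APoly (l : ℕ) : Polynomial ℚ :=
  (X ^ 2 + X + 1) ^ (l - 1) * (2 * X + 1) * (X + 2) * (X - 1)

lemma APoly_natDegree_le (l : ℕ) (hl : 0 < l) : (APoly l).natDegree ≤ 2 * l + 1 := by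
  unfold APoly
  have h1 : ((X ^ 2 + X + 1 : ℚ[X]) ^ (l - 1)).natDegree ≤ 2 * (l - 1) := by
    apply (natDegree_pow_le).trans
    have h : (X ^ 2 + X + 1 : ℚ[X]).natDegree ≤ 2 := by compute_degree
    calc (l - 1) * (X ^ 2 + X + 1 : ℚ[X]).natDegree ≤ (l - 1) * 2 :=
          Nat.mul_le_mul_left _ h
      _ = 2 * (l - 1) := by ring
  have h2 : (2 * X + 1 : ℚ[X]).natDegree ≤ 1 := by compute_degree
  have h3 : (X + 2 : ℚ[X]).natDegree ≤ 1 := by compute_degree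
  have h4 : (X - 1 : ℚ[X]).natDegree ≤ 1 := by compute_degree
  calc ((X ^ 2 + X + 1 : ℚ[X]) ^ (l - 1) * (2 * X + 1) * (X + 2) * (X - 1)).natDegree
      ≤ ((X ^ 2 + X + 1 : ℚ[X]) ^ (l - 1) * (2 * X + 1) * (X + 2)).natDegree
        + (X - 1 : ℚ[X]).natDegree := natDegree_mul_le
    _ ≤ (((X ^ 2 + X + 1 : ℚ[X]) ^ (l - 1) * (2 * X + 1)).natDegree
        + (X + 2 : ℚ[X]).natDegree) + (X - 1 : ℚ[X]).natDegree := by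
          gcongr; exact natDegree_mul_le
    _ ≤ ((((X ^ 2 + X + 1 : ℚ[X]) ^ (l - 1)).natDegree
        + (2 * X + 1 : ℚ[X]).natDegree) + (X + 2 : ℚ[X]).natDegree)
        + (X - 1 : ℚ[X]).natDegree := by gcongr; exact natDegree_mul_le
    _ ≤ 2 * (l - 1) + 1 + 1 + 1 := by gcongr
    _ ≤ 2 * l + 1 := by omega

lemma key (l : ℕ) (hl : 0 < l) :
    ∑ r ∈ Finset.range (2 * l + 1 + 1),
      C ((APoly l).coeff r) * ((-X) ^ r * (1 + X) ^ (2 * l + 1 - r)) = APoly l := by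
  apply IsFractionRing.injective ℚ[X] (RatFunc ℚ)
  set f := algebraMap ℚ[X] (RatFunc ℚ) with hf
  set t : RatFunc ℚ := RatFunc.X with ht
  have hX : f X = t := RatFunc.algebraMap_X
  have hne : (1 + X : ℚ[X]) ≠ 0 := by
    intro h
    have := congrArg (fun p => Polynomial.coeff p 0) h
    simp at this
  have h1t : (1 + t) ≠ 0 := by
    rw [← map_one f, ← hX, ← map_add]
    exact (map_ne_zero_iff f (IsFractionRing.injective _ _)).mpr hne
  set u : RatFunc ℚ := -t / (1 + t) with hu
  -- step 1: each summand maps to (1+t)^(2l+1) * a_r * u^r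
  have hsum : f (∑ r ∈ Finset.range (2 * l + 1 + 1),
      C ((APoly l).coeff r) * ((-X) ^ r * (1 + X) ^ (2 * l + 1 - r)))
      = (1 + t) ^ (2 * l + 1) * Polynomial.aeval u (APoly l) := by
    rw [map_sum]
    have hP : Polynomial.aeval u (APoly l)
        = ∑ r ∈ Finset.range (2 * l + 1 + 1), (algebraMap ℚ _ ((APoly l).coeff r)) * u ^ r := by
      conv_lhs => rw [(APoly l).as_sum_range' (2 * l + 1 + 1)
        (Nat.lt_succ_of_le (APoly_natDegree_le l hl))]
      rw [map_sum]
      congr 1; ext r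
      rw [← C_mul_X_pow_eq_monomial]
      simp [Polynomial.aeval_C]
    rw [hP, Finset.mul_sum]
    apply Finset.sum_congr rfl
    intro r hr
    rw [Finset.mem_range] at hr
    have hrle : r ≤ 2 * l + 1 := Nat.lt_succ_iff.mp hr
    rw [map_mul, map_mul, map_pow, map_pow, map_neg, hX, map_add, map_one, hX]
    have hcomm : (1 + t) ^ (2 * l + 1) * ((algebraMap ℚ _ ((APoly l).coeff r)) * u ^ r)
        = (algebraMap ℚ _ ((APoly l).coeff r)) * ((1 + t) ^ (2 * l + 1) * u ^ r) := by ring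
    rw [hcomm]
    have hfC : f (C ((APoly l).coeff r)) = algebraMap ℚ _ ((APoly l).coeff r) := by
      simp [hf, ← IsScalarTower.algebraMap_apply]
    rw [hfC]
    congr 1
    -- (1+t)^(2l+1) * u^r = (-t)^r * (1+t)^(2l+1-r)
    rw [hu, div_pow, pow_sub₀ _ h1t hrle]
    ring
  rw [hsum]
  -- step 2: (1+t)^(2l+1) * aeval u P = f P
  unfold APoly
  simp only [map_mul, map_pow, map_add, map_sub, map_one, map_ofNat,
    Polynomial.aeval_X, hX]
  have hsplit : (2 * l + 1) = 2 * (l - 1) + 3 := by omega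
  rw [hsplit, pow_add, pow_mul]
  have e1 : ((1 + t) ^ 2) * (u ^ 2 + u + 1) = t ^ 2 + t + 1 := by
    rw [hu]; field_simp; ring
  have e2 : (1 + t) ^ 3 * ((2 * u + 1) * (u + 2) * (u - 1))
      = (2 * t + 1) * (t + 2) * (t - 1) := by
    rw [hu]; field_simp; ring
  calc ((1 + t) ^ 2) ^ (l - 1) * (1 + t) ^ 3
        * ((u ^ 2 + u + 1) ^ (l - 1) * (2 * u + 1) * (u + 2) * (u - 1))
      = (((1 + t) ^ 2) * (u ^ 2 + u + 1)) ^ (l - 1)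
        * ((1 + t) ^ 3 * ((2 * u + 1) * (u + 2) * (u - 1))) := by
          rw [mul_pow]; ring
    _ = (t ^ 2 + t + 1) ^ (l - 1) * ((2 * t + 1) * (t + 2) * (t - 1)) := by rw [e1, e2]
    _ = (t ^ 2 + t + 1) ^ (l - 1) * (2 * t + 1) * (t + 2) * (t - 1) := by ring

theorem stmt4 (l : ℕ) (hl : 0 < l) (m : ℕ) (hm : m ≤ 2 * l + 1) :
    ∑ r ∈ Finset.range (m + 1),
      (Nat.choose (2 * l + 1 - r) (m - r) : ℚ) * (-1) ^ r * (APoly l).coeff r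
    = (APoly l).coeff m := by
  conv_rhs => rw [← key l hl]
  rw [finset_sum_coeff]
  have hterm : ∀ r : ℕ,
      (C ((APoly l).coeff r) * ((-X) ^ r * (1 + X) ^ (2 * l + 1 - r))).coeff m
      = if r ≤ m then
          (Nat.choose (2 * l + 1 - r) (m - r) : ℚ) * (-1) ^ r * (APoly l).coeff r
        else 0 := by
    intro r
    have hneg : ((-X : ℚ[X])) ^ r = C ((-1 : ℚ) ^ r) * X ^ r := by
      rw [neg_pow, map_pow, map_neg, map_one]
    rw [hneg]
    have : C ((APoly l).coeff r) * (C ((-1 : ℚ) ^ r) * X ^ r * (1 + X) ^ (2 * l + 1 - r))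
        = C ((APoly l).coeff r * (-1 : ℚ) ^ r) * ((1 + X) ^ (2 * l + 1 - r) * X ^ r) := by
      rw [map_mul]; ring
    rw [this, coeff_C_mul, coeff_mul_X_pow']
    by_cases h : r ≤ m
    · rw [if_pos h, if_pos h, coeff_one_add_X_pow]
      ring
    · rw [if_neg h, if_neg h, mul_zero]
  rw [eq_comm]
  rw [← Finset.sum_subset (Finset.range_subset_range.mpr (by omega : m + 1 ≤ 2 * l + 1 + 1))
    (fun r _ hr => by rw [hterm r, if_neg (by simp at hr ⊢; omega)])]
  apply Finset.sum_congr rfl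
  intro r hr
  rw [Finset.mem_range] at hr
  rw [hterm r, if_pos (by omega)]
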